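/- Subgradient inequality from monotonicity. Let a, b ∈ X with a ≠ b, and let f : X → ℝ̄ be proper and continuous relative to the segment [a, b] with [a, b] ⊆ dom f, locally Lipschitz relative to [a, b] around every point of [a, b], and such that the relative limiting subdifferential map x ↦ ∂_{[a,b]}f(x) is monotone. Then for every u ∈ [a, b] and every u* ∈ ∂_{[a,b]}f(u), one has ⟨u*, x − u⟩ ≤ f(x) − f(u) for all x ∈ [a, b]; consequently f is convex on [a, b]. -/

import Mathlib

open Filter Topology Set

noncomputable section

/-- A normed space is locally uniformly convex. -/
def LocUnifConvex (E : Type*) [NormedAddCommGroup E] : Prop :=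
  ∀ x : E, ‖x‖ = 1 → ∀ ε : ℝ, 0 < ε →
    ∃ δ : ℝ, 0 < δ ∧ ∀ y : E, ‖y‖ = 1 → 2 - δ < ‖x + y‖ → ‖x - y‖ < ε

/-- Standing assumptions of the paper: `X` is reflexive, both `X` and its dual `X*` are
locally uniformly convex, and the norm of `X` is Fréchet differentiable at every
nonzero point. -/
def StandingAssumptions (X : Type*) [NormedAddCommGroup X] [NormedSpace ℝ X] : Prop :=
  Function.Surjective (⇑(NormedSpace.inclusionInDoubleDual ℝ X)) ∧
  LocUnifConvex X ∧ LocUnifConvex (X →L[ℝ] ℝ) ∧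
  ∀ x : X, x ≠ 0 → DifferentiableAt ℝ (fun y : X => ‖y‖) x

variable {X : Type*}

open scoped Classical in
/-- The restriction `f_Ω` of `f` to `Ω` (equal to `+∞` off `Ω`). -/
def restr (f : X → EReal) (Ω : Set X) : X → EReal := fun x => if x ∈ Ω then f x else ⊤

/-- The epigraph of an extended-real-valued function, as a subset of `X × ℝ`. -/
def epiSet (g : X → EReal) : Set (X × ℝ) := {p | g p.1 ≤ (p.2 : EReal)}

/-- The paper's addition on `ℝ̄ = ℝ ∪ {±∞}`, with the convention `∞ - ∞ = ∞`
(i.e. `⊤` dominates). -/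
def pAdd (a b : EReal) : EReal := if a = ⊤ ∨ b = ⊤ then ⊤ else a + b

section NormedX
variable [NormedAddCommGroup X] [NormedSpace ℝ X]

/-- The `ε`-normal set to `S ⊆ X` at `xb`. -/
def eNormal (ε : ℝ) (xb : X) (S : Set X) : Set (X →L[ℝ] ℝ) :=
  {xs | Filter.limsup (fun x => ((xs (x - xb) / ‖x - xb‖ : ℝ) : EReal))
      (nhdsWithin xb S) ≤ (ε : EReal)}

/-- The `ε`-normal set to `S ⊆ X × ℝ` at `zb`, where `X × ℝ` carries the norm
`‖(x, r)‖ = ‖x‖ + |r|` and the dual pairing is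
`⟨(x*, r*), (x, r)⟩ = ⟨x*, x⟩ + r* r`. -/
def eNormalProd (ε : ℝ) (zb : X × ℝ) (S : Set (X × ℝ)) : Set ((X →L[ℝ] ℝ) × ℝ) :=
  {zs | Filter.limsup
      (fun z => (((zs.1 (z.1 - zb.1) + zs.2 * (z.2 - zb.2)) /
        (‖z.1 - zb.1‖ + |z.2 - zb.2|) : ℝ) : EReal)) (nhdsWithin zb S) ≤ (ε : EReal)}

/-- The tangent cone to `Ω` at `xb`. -/
def tanCone (Ω : Set X) (xb : X) : Set X :=
  {v | ∃ (t : ℕ → ℝ) (w : ℕ → X), (∀ k, 0 < t k) ∧ Tendsto t atTop (nhds 0) ∧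
    Tendsto w atTop (nhds v) ∧ ∀ k, xb + t k • w k ∈ Ω}

/-- The duality mapping `J(x) = {x* : ⟨x*, x⟩ = ‖x‖² = ‖x*‖²}`. -/
def dualityMap (x : X) : Set (X →L[ℝ] ℝ) := {xs | xs x = ‖x‖ ^ 2 ∧ xs x = ‖xs‖ ^ 2}

/-- `J(A) = ⋃ x ∈ A, J(x)`. -/
def dualityMapSet (A : Set X) : Set (X →L[ℝ] ℝ) := ⋃ x ∈ A, dualityMap x

/-- The geometric `ε`-subdifferential `∂̂_ε g(xb)` (empty unless `g(xb)` is finite). -/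
def geomSub (ε : ℝ) (g : X → EReal) (xb : X) : Set (X →L[ℝ] ℝ) :=
  {xs | ∃ r : ℝ, g xb = (r : EReal) ∧ (xs, (-1 : ℝ)) ∈ eNormalProd ε (xb, r) (epiSet g)}

/-- The `ε`-regular subdifferential of `f` relative to `Ω` at `xb`:
`∂̂^ε_Ω f(xb) = ∂̂_ε f_Ω(xb) ∩ J(T(xb, Ω))`. -/
def relRegSub (ε : ℝ) (Ω : Set X) (f : X → EReal) (xb : X) : Set (X →L[ℝ] ℝ) :=
  geomSub ε (restr f Ω) xb ∩ dualityMapSet (tanCone Ω xb)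

/-- Weak* convergence of a sequence of functionals. -/
def WeakStarTendsto (u : ℕ → X →L[ℝ] ℝ) (l : X →L[ℝ] ℝ) : Prop :=
  ∀ v : X, Tendsto (fun k => u k v) atTop (nhds (l v))

/-- The limiting subdifferential of `f` relative to `Ω` at `xb`. -/
def relLimSub (Ω : Set X) (f : X → EReal) (xb : X) : Set (X →L[ℝ] ℝ) :=
  {xs | ∃ (ε : ℕ → ℝ) (x : ℕ → X) (u : ℕ → X →L[ℝ] ℝ),
    (∀ k, 0 < ε k) ∧ Antitone ε ∧ Tendsto ε atTop (nhds 0) ∧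
    (∀ k, x k ∈ Ω) ∧ Tendsto x atTop (nhds xb) ∧
    Tendsto (fun k => f (x k)) atTop (nhds (f xb)) ∧
    (∀ k, u k ∈ relRegSub (ε k) Ω f (x k)) ∧ WeakStarTendsto u xs}

/-- The (Mordukhovich) limiting subdifferential of `g` at `xb`. -/
def limSub (g : X → EReal) (xb : X) : Set (X →L[ℝ] ℝ) :=
  {xs | ∃ (ε : ℕ → ℝ) (x : ℕ → X) (u : ℕ → X →L[ℝ] ℝ),
    (∀ k, 0 < ε k) ∧ Antitone ε ∧ Tendsto ε atTop (nhds 0) ∧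
    Tendsto x atTop (nhds xb) ∧ Tendsto (fun k => g (x k)) atTop (nhds (g xb)) ∧
    (∀ k, u k ∈ geomSub (ε k) g (x k)) ∧ WeakStarTendsto u xs}

/-- `f` is lower semicontinuous relative to `Ω` at `xb`. -/
def LscRelAt (f : X → EReal) (Ω : Set X) (xb : X) : Prop :=
  f xb ≤ Filter.liminf f (nhdsWithin xb Ω)

/-- `f` is lower semicontinuous relative to `Ω` (at every point of `Ω ∩ dom f`). -/
def LscRelOn (f : X → EReal) (Ω : Set X) : Prop :=
  ∀ x ∈ Ω, f x ≠ ⊤ → LscRelAt f Ω x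

/-- `f` is lower semicontinuous relative to `Ω` around `xb`. -/
def LscRelAround (f : X → EReal) (Ω : Set X) (xb : X) : Prop :=
  ∃ U ∈ 𝓝 xb, ∀ x ∈ U ∩ Ω, f x ≠ ⊤ → LscRelAt f Ω x

/-- `f` is locally Lipschitz relative to `Ω` around `xb` with modulus `ℓ`. -/
def LocLipRel (f : X → EReal) (Ω : Set X) (xb : X) (ℓ : ℝ) : Prop :=
  ∃ U ∈ 𝓝 xb, (∀ x ∈ U ∩ Ω, ∃ r : ℝ, f x = (r : EReal)) ∧
    ∀ x ∈ U ∩ Ω, ∀ u ∈ U ∩ Ω, |(f x).toReal - (f u).toReal| ≤ ℓ * ‖x - u‖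

/-- A set is locally closed around a point. -/
def LocallyClosedAt {E : Type*} [MetricSpace E] (S : Set E) (p : E) : Prop :=
  ∃ r : ℝ, 0 < r ∧ IsClosed (S ∩ Metric.closedBall p r)

/-- `f` is (finite and) continuous relative to `Ω`. -/
def ContRelOn (f : X → EReal) (Ω : Set X) : Prop :=
  (∀ x ∈ Ω, ∃ r : ℝ, f x = (r : EReal)) ∧
  ∀ x ∈ Ω, Tendsto f (nhdsWithin x Ω) (nhds (f x))

/-- `f` is convex on the set `S`. -/
def ConvexOnSet (f : X → EReal) (S : Set X) : Prop :=
  ∀ x ∈ S, ∀ y ∈ S, ∀ t : ℝ, 0 ≤ t → t ≤ 1 →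
    f (t • x + (1 - t) • y) ≤ (t : EReal) * f x + ((1 - t : ℝ) : EReal) * f y

/-- Monotonicity of a set-valued map from `X` into `X*`. -/
def MonotoneSV (F : X → Set (X →L[ℝ] ℝ)) : Prop :=
  ∀ x u : X, ∀ xs us : X →L[ℝ] ℝ, xs ∈ F x → us ∈ F u → 0 ≤ (xs - us) (x - u)

end NormedX

end

/-!
Write `g t = f (a + t • (b - a))`. If `g` has a Fréchet subgradient `c` at an interior `t`,
then `(c / ‖b - a‖²) • j`, for `j ∈ J(b - a)`, lies in every `ε`-regular subdifferential of `f`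
relative to `[a, b]` at `a + t • (b - a)`, hence in the limiting one. Monotonicity of
`∂_{[a,b]} f` therefore makes the Fréchet subgradients of `g` monotone, also against the numbers
`⟨u*, b - a⟩` for `u* ∈ ∂_{[a,b]} f(u)`.

A one-dimensional mean value argument closes the proof: if `g q - g p < c (q - p)`, an interior
minimiser of `g s - c s + θ / (q - s)` on `[p, q)` carries a Fréchet subgradient of `g` below `c`.
A failure of the subgradient inequality, or of the slope inequality characterising convexity,
would thus produce two subgradients of `g` violating monotonicity.
-/

def HasFrechetSubgradientAt (g : ℝ → ℝ) (c t : ℝ) : Prop :=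
  ∀ ε > 0, ∀ᶠ s in 𝓝 t, g t + c * (s - t) - ε * |s - t| ≤ g s

theorem HasFrechetSubgradientAt.comp_const_sub {g : ℝ → ℝ} {c r t : ℝ}
    (hg : HasFrechetSubgradientAt g c (r - t)) :
    HasFrechetSubgradientAt (fun s => g (r - s)) (-c) t := by
  intro ε hε
  have hcont : Tendsto (fun s => r - s) (𝓝 t) (𝓝 (r - t)) :=
    (continuous_const.sub continuous_id).tendsto t
  filter_upwards [hcont.eventually (hg ε hε)] with s hs
  rw [show r - s - (r - t) = -(s - t) by ring, abs_neg] at hs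
  linarith

theorem hasFrechetSubgradientAt_of_isLocalMin_add {g ψ : ℝ → ℝ} {ψ' t : ℝ}
    (hψ : HasDerivAt ψ ψ' t) (hmin : IsLocalMin (fun s => g s + ψ s) t) :
    HasFrechetSubgradientAt g (-ψ') t := by
  intro ε hε
  filter_upwards [hmin, (hasDerivAt_iff_isLittleO.mp hψ).def hε] with s hs hψs
  rw [Real.norm_eq_abs, Real.norm_eq_abs, smul_eq_mul] at hψs
  have := le_abs_self (ψ s - ψ t - (s - t) * ψ')
  nlinarith

theorem tendsto_div_sub_nhdsLT_atTop {θ q : ℝ} (hθ : 0 < θ) :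
    Tendsto (fun s => θ / (q - s)) (𝓝[<] q) atTop := by
  have h : Tendsto (fun s => q - s) (𝓝 q) (𝓝 (q - q)) := tendsto_const_nhds.sub tendsto_id
  rw [sub_self] at h
  have hsub : Tendsto (fun s => q - s) (𝓝[<] q) (𝓝[>] 0) :=
    tendsto_nhdsWithin_iff.mpr ⟨h.mono_left nhdsWithin_le_nhds,
      eventually_nhdsWithin_of_forall fun s (hs : s < q) => sub_pos.mpr hs⟩
  simpa [div_eq_mul_inv] using (tendsto_inv_nhdsGT_zero.comp hsub).const_mul_atTop hθ

theorem exists_isLocalMin_add_div_sub {φ : ℝ → ℝ} {p q : ℝ} (hpq : p < q)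
    (hφ : ContinuousOn φ (Icc p q)) (hlt : φ q < φ p) :
    ∃ θ > 0, ∃ t ∈ Ioo p q, IsLocalMin (fun s => φ s + θ / (q - s)) t := by
  have hφq : Tendsto φ (𝓝[<] q) (𝓝 (φ q)) :=
    (hφ q (right_mem_Icc.mpr hpq.le)).tendsto.mono_left (nhdsWithin_le_of_mem (Icc_mem_nhdsLT hpq))
  obtain ⟨s₀, hs₀, hs₀q⟩ :=
    ((hφq.eventually_lt_const hlt).and (Ioo_mem_nhdsLT hpq)).exists
  -- `θ` is small enough for `Φ s₀ < Φ p`; the barrier then keeps the minimiser away from `q`.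
  set θ := (φ p - φ s₀) * (q - s₀) / 2
  have hs₀q' : 0 < q - s₀ := sub_pos.mpr hs₀q.2
  have hθ : 0 < θ := by positivity
  set Φ := fun s => φ s + θ / (q - s)
  have hΦs₀ : Φ s₀ < Φ p := by
    have : θ / (q - s₀) = (φ p - φ s₀) / 2 := by simp only [θ]; field_simp
    have : 0 < θ / (q - p) := div_pos hθ (sub_pos.mpr hpq)
    simp only [Φ]
    linarith
  obtain ⟨s₁, hs₁, hs₁q⟩ := (((hφq.add_atTop (tendsto_div_sub_nhdsLT_atTop hθ)).eventually_gt_atTop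
    (Φ s₀)).and (Ioo_mem_nhdsLT hs₀q.2)).exists
  have hΦc : ContinuousOn Φ (Icc p s₁) := by
    refine (hφ.mono (Icc_subset_Icc le_rfl hs₁q.2.le)).add
      (continuousOn_const.div (continuousOn_const.sub continuousOn_id) fun s hs => ?_)
    exact (sub_pos.mpr (hs.2.trans_lt hs₁q.2)).ne'
  have hends : ∀ s ∈ Icc p s₁ \ Ioo p s₁, Φ s₀ < Φ s := by
    rintro s ⟨⟨hps, hss₁⟩, hs⟩
    rcases hps.eq_or_lt with rfl | hps
    · exact hΦs₀
    · obtain rfl : s = s₁ := hss₁.eq_or_lt.resolve_right fun h => hs ⟨hps, h⟩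
      exact hs₁
  obtain ⟨t, ht, hmin⟩ := isCompact_Icc.exists_isLocalMin_mem_open Ioo_subset_Icc_self hΦc
    ⟨hs₀q.1.le, hs₁q.1.le⟩ hends isOpen_Ioo
  exact ⟨θ, hθ, t, ⟨ht.1, ht.2.trans hs₁q.2⟩, hmin⟩

theorem exists_hasFrechetSubgradientAt_lt {g : ℝ → ℝ} {p q c : ℝ} (hpq : p < q)
    (hg : ContinuousOn g (Icc p q)) (hlt : g q - g p < c * (q - p)) :
    ∃ t ∈ Ioo p q, ∃ c' < c, HasFrechetSubgradientAt g c' t := by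
  obtain ⟨θ, hθ, t, ht, hmin⟩ := exists_isLocalMin_add_div_sub (φ := fun s => g s - c * s) hpq
    (hg.sub (continuousOn_const.mul continuousOn_id)) (by linarith)
  have hqt : q - t ≠ 0 := (sub_pos.mpr ht.2).ne'
  have hψ : HasDerivAt (fun s => θ / (q - s) - c * s) (θ / (q - t) ^ 2 - c) t := by
    have h := ((hasDerivAt_const t θ).fun_div ((hasDerivAt_id' t).const_sub q) hqt).sub
      ((hasDerivAt_id' t).const_mul c)
    exact h.congr_deriv (by ring)
  have hmin' : IsLocalMin (fun s => g s + (θ / (q - s) - c * s)) t := by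
    convert hmin using 2 with s
    ring
  refine ⟨t, ht, c - θ / (q - t) ^ 2, by simp only [sub_lt_self_iff]; positivity, ?_⟩
  simpa only [neg_sub] using hasFrechetSubgradientAt_of_isLocalMin_add hψ hmin'

theorem exists_hasFrechetSubgradientAt_gt {g : ℝ → ℝ} {p q c : ℝ} (hpq : p < q)
    (hg : ContinuousOn g (Icc p q)) (hlt : c * (q - p) < g q - g p) :
    ∃ t ∈ Ioo p q, ∃ c' > c, HasFrechetSubgradientAt g c' t := by
  have hreflect : ContinuousOn (fun s => g (p + q - s)) (Icc p q) :=
    hg.comp (continuousOn_const.sub continuousOn_id) fun s hs =>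
      ⟨by linarith [hs.2], by linarith [hs.1]⟩
  have hlt' : g (p + q - q) - g (p + q - p) < -c * (q - p) := by
    rw [add_sub_cancel_right, add_sub_cancel_left]
    linarith
  obtain ⟨t, ht, c', hc', hsub⟩ := exists_hasFrechetSubgradientAt_lt hpq hreflect hlt'
  refine ⟨p + q - t, ⟨by linarith [ht.2], by linarith [ht.1]⟩, -c', by linarith, ?_⟩
  rw [← sub_sub_cancel (p + q) t] at hsub
  simpa only [sub_sub_cancel] using hsub.comp_const_sub

theorem mul_sub_le_sub_of_monotone_subgradients {g : ℝ → ℝ} {p q τ σ d : ℝ}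
    (hg : ContinuousOn g (Icc p q)) (hτ : τ ∈ Icc p q) (hσ : σ ∈ Icc p q)
    (hd : ∀ t ∈ Ioo p q, ∀ c, HasFrechetSubgradientAt g c t → 0 ≤ (d - c) * (τ - t)) :
    d * (σ - τ) ≤ g σ - g τ := by
  by_contra! h
  rcases lt_trichotomy τ σ with hτσ | rfl | hστ
  · obtain ⟨t, ht, c, hc, hsub⟩ :=
      exists_hasFrechetSubgradientAt_lt hτσ (hg.mono (Icc_subset_Icc hτ.1 hσ.2)) h
    have := hd t ⟨hτ.1.trans_lt ht.1, ht.2.trans_le hσ.2⟩ c hsub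
    nlinarith [ht.1]
  · simp at h
  · obtain ⟨t, ht, c, hc, hsub⟩ := exists_hasFrechetSubgradientAt_gt (c := d) hστ
      (hg.mono (Icc_subset_Icc hσ.1 hτ.2)) (by linarith)
    have := hd t ⟨hσ.1.trans_lt ht.1, ht.2.trans_le hτ.2⟩ c hsub
    nlinarith [ht.2]

theorem convexOn_of_monotone_subgradients {g : ℝ → ℝ} {p q : ℝ} (hg : ContinuousOn g (Icc p q))
    (hmon : ∀ t₁ ∈ Ioo p q, ∀ t₂ ∈ Ioo p q, ∀ c₁ c₂, HasFrechetSubgradientAt g c₁ t₁ →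
      HasFrechetSubgradientAt g c₂ t₂ → 0 ≤ (c₁ - c₂) * (t₁ - t₂)) :
    ConvexOn ℝ (Icc p q) g := by
  refine convexOn_of_slope_mono_adjacent (convex_Icc p q) fun {x y z} hx hz hxy hyz => ?_
  by_contra! h
  obtain ⟨c, hzy, hyx⟩ := exists_between h
  rw [div_lt_iff₀ (sub_pos.mpr hyz)] at hzy
  rw [lt_div_iff₀ (sub_pos.mpr hxy)] at hyx
  obtain ⟨t₁, ht₁, c₁, hc₁, h₁⟩ :=
    exists_hasFrechetSubgradientAt_lt hyz (hg.mono (Icc_subset_Icc (hx.1.trans hxy.le) hz.2)) hzy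
  obtain ⟨t₂, ht₂, c₂, hc₂, h₂⟩ :=
    exists_hasFrechetSubgradientAt_gt hxy (hg.mono (Icc_subset_Icc hx.1 (hyz.le.trans hz.2))) hyx
  have := hmon t₁ ⟨hx.1.trans_lt (hxy.trans ht₁.1), ht₁.2.trans_le hz.2⟩
    t₂ ⟨hx.1.trans_lt ht₂.1, ht₂.2.trans_le (hyz.le.trans hz.2)⟩ c₁ c₂ h₁ h₂
  nlinarith [ht₁.1, ht₂.2]

section Banach

variable {X : Type*} [NormedAddCommGroup X] [NormedSpace ℝ X]

theorem exists_mem_dualityMap (v : X) : ∃ j, j ∈ dualityMap v := by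
  rcases eq_or_ne v 0 with rfl | hv
  · exact ⟨0, by simp [dualityMap]⟩
  obtain ⟨g, hg, hgv⟩ := exists_dual_vector ℝ v (norm_ne_zero_iff.mpr hv)
  refine ⟨‖v‖ • g, ?_, ?_⟩
  · simp [hgv, sq]
  · rw [norm_smul, hg]
    simp [hgv, sq]

theorem smul_mem_dualityMap {j : X →L[ℝ] ℝ} {v : X} (hj : j ∈ dualityMap v) (s : ℝ) :
    s • j ∈ dualityMap (s • v) := by
  obtain ⟨hjv, hjj⟩ := hj
  have hs : (s • j) (s • v) = s ^ 2 * j v := by simp only [map_smul, smul_apply, smul_eq_mul]; ring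
  refine ⟨?_, ?_⟩ <;> simp only [hs, norm_smul, Real.norm_eq_abs, mul_pow, sq_abs]
  exacts [by rw [hjv], by rw [hjj]]

theorem mem_tanCone_of_eventually_mem {Ω : Set X} {x w : X}
    (h : ∀ᶠ s in 𝓝[>] (0 : ℝ), x + s • w ∈ Ω) : w ∈ tanCone Ω x := by
  have ht : Tendsto (fun k : ℕ => 1 / ((k : ℝ) + 1)) atTop (𝓝[>] 0) :=
    tendsto_nhdsWithin_iff.mpr ⟨tendsto_one_div_add_atTop_nhds_zero_nat,
      Eventually.of_forall fun _ => mem_Ioi.mpr Nat.one_div_pos_of_nat⟩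
  obtain ⟨N, hN⟩ := (ht.eventually h).exists_forall_of_atTop
  exact ⟨fun k => 1 / (((k + N : ℕ) : ℝ) + 1), fun _ => w, fun k => Nat.one_div_pos_of_nat,
    ((tendsto_add_atTop_iff_nat N).mpr ht).mono_right nhdsWithin_le_nhds, tendsto_const_nhds,
    fun k => hN _ (Nat.le_add_left N k)⟩

theorem mem_geomSub_of_eventually {ε r : ℝ} {g : X → EReal} {x : X} {xs : X →L[ℝ] ℝ}
    (hε : 0 ≤ ε) (hr : g x = r)
    (h : ∀ᶠ y in 𝓝 x, ∀ s : ℝ, g y ≤ s → xs (y - x) - ε * ‖y - x‖ ≤ s - r) :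
    xs ∈ geomSub ε g x := by
  refine ⟨r, hr, ?_⟩
  show limsup _ _ ≤ (ε : EReal)
  refine limsup_le_of_le (by isBoundedDefault) ?_
  filter_upwards [self_mem_nhdsWithin,
    nhdsWithin_le_nhds ((continuous_fst.tendsto (x, r)).eventually h)] with z hz hzh
  have hle := hzh z.2 hz
  rw [EReal.coe_le_coe_iff]
  refine div_le_of_le_mul₀ (by positivity) hε ?_
  have := mul_nonneg hε (abs_nonneg (z.2 - r))
  linarith

theorem mem_relLimSub_of_forall_mem_relRegSub {Ω : Set X} {f : X → EReal} {x : X}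
    {xs : X →L[ℝ] ℝ} (hx : x ∈ Ω) (h : ∀ ε > 0, xs ∈ relRegSub ε Ω f x) :
    xs ∈ relLimSub Ω f x :=
  ⟨fun k => 1 / ((k : ℝ) + 1), fun _ => x, fun _ => xs, fun _ => Nat.one_div_pos_of_nat,
    fun _ _ hmn => Nat.one_div_le_one_div hmn, tendsto_one_div_add_atTop_nhds_zero_nat, fun _ => hx,
    tendsto_const_nhds, tendsto_const_nhds, fun _ => h _ Nat.one_div_pos_of_nat,
    fun _ => tendsto_const_nhds⟩

theorem MonotoneSV.apply_sub_mul_sub_nonneg {F : X → Set (X →L[ℝ] ℝ)} (hF : MonotoneSV F)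
    {a v : X} {t₁ t₂ : ℝ} {xs₁ xs₂ : X →L[ℝ] ℝ} (h₁ : xs₁ ∈ F (a + t₁ • v))
    (h₂ : xs₂ ∈ F (a + t₂ • v)) : 0 ≤ (xs₁ v - xs₂ v) * (t₁ - t₂) := by
  have h := hF _ _ _ _ h₁ h₂
  rwa [show a + t₁ • v - (a + t₂ • v) = (t₁ - t₂) • v by module, map_smul, smul_eq_mul,
    sub_apply, mul_comm] at h

theorem add_smul_sub_mem_segment {a b : X} {t : ℝ} (ht : t ∈ Icc 0 1) :
    a + t • (b - a) ∈ segment ℝ a b :=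
  segment_eq_image' ℝ a b ▸ mem_image_of_mem _ ht

theorem mem_tanCone_segment {a b : X} {t : ℝ} (ht : t ∈ Ioo 0 1) (s : ℝ) :
    s • (b - a) ∈ tanCone (segment ℝ a b) (a + t • (b - a)) := by
  have hcont : Tendsto (fun r : ℝ => t + r * s) (𝓝 0) (𝓝 t) :=
    (by fun_prop : Continuous fun r : ℝ => t + r * s).tendsto' 0 t (by simp)
  refine mem_tanCone_of_eventually_mem ?_
  filter_upwards [nhdsWithin_le_nhds (hcont.eventually (Icc_mem_nhds ht.1 ht.2))] with r hr
  rw [add_assoc, smul_smul, ← add_smul]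
  exact add_smul_sub_mem_segment hr

end Banach

section Segment

variable {X : Type*} [NormedAddCommGroup X] [NormedSpace ℝ X] {f : X → EReal} {a b : X}

-- Only evaluated where `f` is finite, so `EReal.toReal` loses nothing.
def lineSlice (f : X → EReal) (a v : X) (t : ℝ) : ℝ := (f (a + t • v)).toReal

theorem ContRelOn.coe_lineSlice (hf : ContRelOn f (segment ℝ a b)) {t : ℝ} (ht : t ∈ Icc 0 1) :
    (lineSlice f a (b - a) t : EReal) = f (a + t • (b - a)) := by
  obtain ⟨r, hr⟩ := hf.1 _ (add_smul_sub_mem_segment ht)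
  simp [lineSlice, hr]

theorem ContRelOn.continuousOn_lineSlice (hf : ContRelOn f (segment ℝ a b)) :
    ContinuousOn (lineSlice f a (b - a)) (Icc 0 1) := by
  intro t ht
  have hline : ContinuousWithinAt (fun s : ℝ => a + s • (b - a)) (Icc 0 1) t := by fun_prop
  obtain ⟨r, hr⟩ := hf.1 _ (add_smul_sub_mem_segment ht)
  have hf' := (hf.2 _ (add_smul_sub_mem_segment ht)).comp
    (hline.tendsto_nhdsWithin fun s hs => add_smul_sub_mem_segment hs)
  exact (EReal.tendsto_toReal (hr ▸ EReal.coe_ne_top r) (hr ▸ EReal.coe_ne_bot r)).comp hf'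

theorem mem_geomSub_restr_segment (hab : a ≠ b) (hf : ContRelOn f (segment ℝ a b))
    {j : X →L[ℝ] ℝ} (hj : j ∈ dualityMap (b - a)) {t c ε : ℝ} (ht : t ∈ Icc 0 1)
    (hg : HasFrechetSubgradientAt (lineSlice f a (b - a)) c t) (hε : 0 < ε) :
    (c / ‖b - a‖ ^ 2) • j ∈ geomSub ε (restr f (segment ℝ a b)) (a + t • (b - a)) := by
  have hv : ‖b - a‖ ≠ 0 := norm_ne_zero_iff.mpr (sub_ne_zero.mpr hab.symm)
  -- `y ↦ j (y - a) / ‖b - a‖²` is a continuous coordinate on `X` recovering the segment parameter.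
  have hcoord : ∀ s : ℝ, j (a + s • (b - a) - a) / ‖b - a‖ ^ 2 = s := fun s => by
    rw [add_sub_cancel_left, map_smul, hj.1, smul_eq_mul,
      mul_div_cancel_right₀ _ (pow_ne_zero 2 hv)]
  have hcoord_tendsto :
      Tendsto (fun y => j (y - a) / ‖b - a‖ ^ 2) (𝓝 (a + t • (b - a))) (𝓝 t) :=
    (by fun_prop : Continuous fun y => j (y - a) / ‖b - a‖ ^ 2).tendsto' _ _ (hcoord t)
  refine mem_geomSub_of_eventually hε.le
    (by rw [restr, if_pos (add_smul_sub_mem_segment ht), hf.coe_lineSlice ht]) ?_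
  filter_upwards [hcoord_tendsto.eventually (hg (ε * ‖b - a‖) (by positivity))] with y hy s hys
  have hy_mem : y ∈ segment ℝ a b := by
    by_contra h
    rw [restr, if_neg h, top_le_iff] at hys
    exact EReal.coe_ne_top s hys
  rw [restr, if_pos hy_mem] at hys
  rw [segment_eq_image'] at hy_mem
  obtain ⟨t', ht', rfl⟩ := hy_mem
  rw [hcoord] at hy
  have hgs : lineSlice f a (b - a) t' ≤ s := by
    rw [← EReal.coe_le_coe_iff, hf.coe_lineSlice ht']
    exact hys
  rw [show a + t' • (b - a) - (a + t • (b - a)) = (t' - t) • (b - a) by module]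
  simp only [map_smul, smul_apply, smul_eq_mul, hj.1, norm_smul, Real.norm_eq_abs]
  rw [div_mul_cancel₀ _ (pow_ne_zero 2 hv)]
  linarith

theorem mem_relLimSub_segment (hab : a ≠ b) (hf : ContRelOn f (segment ℝ a b))
    {j : X →L[ℝ] ℝ} (hj : j ∈ dualityMap (b - a)) {t c : ℝ} (ht : t ∈ Ioo 0 1)
    (hg : HasFrechetSubgradientAt (lineSlice f a (b - a)) c t) :
    (c / ‖b - a‖ ^ 2) • j ∈ relLimSub (segment ℝ a b) f (a + t • (b - a)) :=
  mem_relLimSub_of_forall_mem_relRegSub (add_smul_sub_mem_segment (Ioo_subset_Icc_self ht))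
    fun _ hε => ⟨mem_geomSub_restr_segment hab hf hj (Ioo_subset_Icc_self ht) hg hε,
      mem_iUnion₂.mpr ⟨_, mem_tanCone_segment ht _, smul_mem_dualityMap hj _⟩⟩

theorem ContRelOn.convexOnSet_segment (hf : ContRelOn f (segment ℝ a b))
    (hconv : ConvexOn ℝ (Icc 0 1) (lineSlice f a (b - a))) : ConvexOnSet f (segment ℝ a b) := by
  intro x hx y hy θ hθ₀ hθ₁
  rw [segment_eq_image'] at hx hy
  obtain ⟨p, hp, rfl⟩ := hx
  obtain ⟨q, hq, rfl⟩ := hy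
  have hm : θ * p + (1 - θ) * q ∈ Icc (0 : ℝ) 1 :=
    convex_Icc 0 1 hp hq hθ₀ (by linarith) (by ring)
  rw [show θ • (a + p • (b - a)) + (1 - θ) • (a + q • (b - a))
      = a + (θ * p + (1 - θ) * q) • (b - a) by module,
    ← hf.coe_lineSlice hm, ← hf.coe_lineSlice hp, ← hf.coe_lineSlice hq, ← EReal.coe_mul,
    ← EReal.coe_mul, ← EReal.coe_add, EReal.coe_le_coe_iff]
  simpa only [smul_eq_mul] using hconv.2 hp hq hθ₀ (by linarith) (by ring)

theorem convexOnSet_singleton {r : ℝ} (hr : f a = r) : ConvexOnSet f {a} := by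
  rintro _ rfl _ rfl θ - -
  rw [Convex.combo_self (add_sub_cancel θ 1), hr, ← EReal.coe_mul, ← EReal.coe_mul,
    ← EReal.coe_add, ← add_mul, add_sub_cancel, one_mul]

end Segment

theorem subgradient_inequality_of_monotone_general
    {X : Type*} [NormedAddCommGroup X] [NormedSpace ℝ X]
    (a b : X)
    (f : X → EReal)
    (hcont : ContRelOn f (segment ℝ a b))
    (hmono : MonotoneSV (relLimSub (segment ℝ a b) f)) :
    (∀ u ∈ segment ℝ a b, ∀ us ∈ relLimSub (segment ℝ a b) f u,
      ∀ x ∈ segment ℝ a b, ((us (x - u) : ℝ) : EReal) ≤ f x - f u) ∧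
    ConvexOnSet f (segment ℝ a b) := by
  rcases eq_or_ne a b with rfl | hab
  · obtain ⟨r, hr⟩ := hcont.1 a (left_mem_segment ℝ a a)
    rw [segment_same]
    refine ⟨?_, convexOnSet_singleton hr⟩
    rintro _ rfl us - _ rfl
    rw [sub_self, map_zero, hr, ← EReal.coe_sub, sub_self]
  obtain ⟨j, hj⟩ := exists_mem_dualityMap (b - a)
  have hv : ‖b - a‖ ≠ 0 := norm_ne_zero_iff.mpr (sub_ne_zero.mpr hab.symm)
  have hval : ∀ c : ℝ, ((c / ‖b - a‖ ^ 2) • j) (b - a) = c := fun c => by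
    rw [smul_apply, hj.1, smul_eq_mul, div_mul_cancel₀ _ (pow_ne_zero 2 hv)]
  have hsub : ∀ t ∈ Ioo (0 : ℝ) 1, ∀ c, HasFrechetSubgradientAt (lineSlice f a (b - a)) c t →
      (c / ‖b - a‖ ^ 2) • j ∈ relLimSub (segment ℝ a b) f (a + t • (b - a)) :=
    fun _ ht _ => mem_relLimSub_segment hab hcont hj ht
  have hgc := hcont.continuousOn_lineSlice
  refine ⟨fun u hu us hus x hx => ?_, hcont.convexOnSet_segment <|
    convexOn_of_monotone_subgradients hgc fun t₁ ht₁ t₂ ht₂ c₁ c₂ h₁ h₂ => ?_⟩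
  · rw [segment_eq_image'] at hu hx
    obtain ⟨τ, hτ, rfl⟩ := hu
    obtain ⟨σ, hσ, rfl⟩ := hx
    rw [← hcont.coe_lineSlice hσ, ← hcont.coe_lineSlice hτ, ← EReal.coe_sub, EReal.coe_le_coe_iff,
      show a + σ • (b - a) - (a + τ • (b - a)) = (σ - τ) • (b - a) by module, map_smul,
      smul_eq_mul, mul_comm]
    refine mul_sub_le_sub_of_monotone_subgradients hgc hτ hσ fun t ht c hc => ?_
    simpa only [hval] using hmono.apply_sub_mul_sub_nonneg hus (hsub t ht c hc)
  · simpa only [hval] using hmono.apply_sub_mul_sub_nonneg (hsub t₁ ht₁ c₁ h₁) (hsub t₂ ht₂ c₂ h₂)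

/-- subgradient inequality from monotonicity. -/
theorem subgradient_inequality_of_monotone
    {X : Type*} [NormedAddCommGroup X] [NormedSpace ℝ X] [CompleteSpace X]
    (hX : StandingAssumptions X)
    (a b : X) (hab : a ≠ b)
    (f : X → EReal) (hproper : (∀ x, f x ≠ ⊥) ∧ ∃ x, f x ≠ ⊤)
    (hdom : ∀ x ∈ segment ℝ a b, f x ≠ ⊤)
    (hcont : ContRelOn f (segment ℝ a b))
    (hlip : ∀ x ∈ segment ℝ a b, ∃ ℓ : ℝ, 0 ≤ ℓ ∧ LocLipRel f (segment ℝ a b) x ℓ)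
    (hmono : MonotoneSV (relLimSub (segment ℝ a b) f)) :
    (∀ u ∈ segment ℝ a b, ∀ us ∈ relLimSub (segment ℝ a b) f u,
      ∀ x ∈ segment ℝ a b, ((us (x - u) : ℝ) : EReal) ≤ f x - f u) ∧
    ConvexOnSet f (segment ℝ a b) :=
  subgradient_inequality_of_monotone_general a b f hcont hmono
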